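/- arXiv:1501.01833 — 2 statements merged into one kernel-verified Lean document; each statement's English description precedes it below -/
import Mathlib

section
/- For any cycle C_n with n ≥ 3, the 2-limited packing number equals ⌊2n/3⌋. -/
/-- The closed neighbourhood `N[v] = {v} ∪ N(v)` of a vertex `v`. -/
def SimpleGraph.closedNbhd {V : Type*} (G : SimpleGraph V) (v : V) : Set V :=
  insert v (G.neighborSet v)

/-- A set `X ⊆ V(G)` is a `k`-limited packing if `|N[v] ∩ X| ≤ k` for every vertex `v`. -/
def SimpleGraph.IsLimitedPacking {V : Type*} (G : SimpleGraph V) (k : ℕ) (X : Set V) : Prop :=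
  ∀ v : V, (X ∩ G.closedNbhd v).ncard ≤ k

/-- `L_k(G)`: the maximum cardinality of a `k`-limited packing in `G`. -/
noncomputable def SimpleGraph.limitedPackingNumber {V : Type*} (G : SimpleGraph V) (k : ℕ) : ℕ :=
  sSup {n | ∃ X : Set V, G.IsLimitedPacking k X ∧ X.ncard = n}

/-!
In a `d`-regular graph every vertex lies in exactly `d + 1` closed neighbourhoods, so double
counting the incidences between a `k`-limited packing `X` and the closed neighbourhoods gives
`(d + 1) |X| ≤ k |V|`; for the cycle (`d = 2`, `k = 2`) this is `|X| ≤ ⌊2n/3⌋`. Conversely, the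
vertices `i` with `3 ∤ i` form a 2-limited packing of `C_n` of size `⌊2n/3⌋`: any three consecutive
vertices of the cycle, including the windows that wrap around through `0`, contain a multiple of 3.
-/

namespace SimpleGraph

variable {V : Type*} {G : SimpleGraph V}

lemma mem_closedNbhd_comm {u v : V} : u ∈ G.closedNbhd v ↔ v ∈ G.closedNbhd u := by
  simp only [closedNbhd, Set.mem_insert_iff, mem_neighborSet, eq_comm, G.adj_comm]

lemma ncard_closedNbhd (v : V) [Fintype (G.neighborSet v)] :
    (G.closedNbhd v).ncard = G.degree v + 1 := by
  rw [closedNbhd, Set.ncard_insert_of_notMem G.notMem_neighborSet_self,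
    ← Nat.card_coe_set_eq, Nat.card_eq_fintype_card, card_neighborSet_eq_degree]

open Finset in
theorem IsLimitedPacking.ncard_mul_le [Fintype V] [G.LocallyFinite] {d k : ℕ} {X : Set V}
    (hG : G.IsRegularOfDegree d) (hX : G.IsLimitedPacking k X) :
    X.ncard * (d + 1) ≤ Fintype.card V * k := by
  classical
  set r : V → V → Prop := fun v x => x ∈ G.closedNbhd v
  have hbelow (x : V) : d + 1 ≤ #(univ.bipartiteBelow r x) := by
    rw [← hG x, ← ncard_closedNbhd, ← Set.ncard_coe_finset]
    exact (congrArg Set.ncard (by ext; simp [r, mem_closedNbhd_comm])).le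
  have habove (v : V) : #(X.toFinset.bipartiteAbove r v) ≤ k := by
    rw [← Set.ncard_coe_finset]
    exact (congrArg Set.ncard (by ext; simp [r])).trans_le (hX v)
  have hdouble := card_mul_le_card_mul' r (fun x _ => hbelow x) (fun v _ => habove v)
  rwa [Set.ncard_eq_toFinset_card']

theorem isLimitedPacking_of_forall_exists_notMem [Finite V] {k : ℕ} {X : Set V}
    (hN : ∀ v, (G.closedNbhd v).ncard ≤ k + 1) (hX : ∀ v, ∃ y ∈ G.closedNbhd v, y ∉ X) :
    G.IsLimitedPacking k X := by
  intro v
  obtain ⟨y, hyN, hyX⟩ := hX v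
  calc (X ∩ G.closedNbhd v).ncard
      ≤ (G.closedNbhd v \ {y}).ncard :=
        Set.ncard_le_ncard (fun x hx => ⟨hx.2, fun hxy => hyX (hxy ▸ hx.1)⟩) (Set.toFinite _)
    _ = (G.closedNbhd v).ncard - 1 := Set.ncard_sdiff_singleton_of_mem hyN
    _ ≤ k := by have := hN v; omega

theorem limitedPackingNumber_eq_of_isGreatest {k b : ℕ}
    (h : IsGreatest {n | ∃ X : Set V, G.IsLimitedPacking k X ∧ X.ncard = n} b) :
    G.limitedPackingNumber k = b :=
  h.csSup_eq

lemma cycleGraph_isRegularOfDegree_two (n : ℕ) : (cycleGraph (n + 3)).IsRegularOfDegree 2 :=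
  fun _ => cycleGraph_degree_three_le

lemma cycleGraph_closedNbhd (n : ℕ) (v : Fin (n + 2)) :
    (cycleGraph (n + 2)).closedNbhd v = {v - 1, v, v + 1} := by
  rw [closedNbhd, cycleGraph_neighborSet, Set.insert_comm]

lemma exists_mem_cycleGraph_closedNbhd_val_mod_three_eq_zero (n : ℕ) (v : Fin (n + 2)) :
    ∃ y ∈ (cycleGraph (n + 2)).closedNbhd v, (y : ℕ) % 3 = 0 := by
  rw [cycleGraph_closedNbhd]
  by_cases h0 : (v : ℕ) % 3 = 0
  · exact ⟨v, by simp, h0⟩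
  by_cases h1 : (v : ℕ) % 3 = 1
  · refine ⟨v - 1, by simp, ?_⟩
    rw [Fin.coe_sub_one, if_neg (fun h => by simp [h] at h1)]
    omega
  · refine ⟨v + 1, by simp, ?_⟩
    rw [Fin.val_add_one]
    split_ifs
    · rfl
    · omega

theorem cycleGraph_isLimitedPacking_two (n : ℕ) :
    (cycleGraph (n + 2)).IsLimitedPacking 2 {i | (i : ℕ) % 3 ≠ 0} := by
  refine isLimitedPacking_of_forall_exists_notMem (fun v => ?_) (fun v => ?_)
  · rw [cycleGraph_closedNbhd]
    refine (Set.ncard_insert_le _ _).trans ?_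
    grw [Set.ncard_insert_le, Set.ncard_singleton]
  · obtain ⟨y, hy, hy3⟩ := exists_mem_cycleGraph_closedNbhd_val_mod_three_eq_zero n v
    exact ⟨y, hy, fun hyX => hyX hy3⟩

end SimpleGraph

lemma Nat.count_mod_three_ne_zero (n : ℕ) : Nat.count (· % 3 ≠ 0) n = 2 * n / 3 := by
  induction n with
  | zero => rfl
  | succ n ih =>
    rw [Nat.count_succ, ih]
    split_ifs <;> grind

lemma Fin.ncard_setOf_val (p : ℕ → Prop) [DecidablePred p] (n : ℕ) :
    {i : Fin n | p i}.ncard = Nat.count p n := by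
  rw [Nat.count_eq_card_filter_range, ← Set.ncard_coe_finset,
    ← Set.ncard_image_of_injective _ Fin.val_injective]
  congr 1
  ext k
  simp only [Set.mem_image, Set.mem_ofPred_eq, Finset.coe_filter, Finset.mem_range]
  exact ⟨by rintro ⟨i, hi, rfl⟩; exact ⟨i.isLt, hi⟩, fun h => ⟨⟨k, h.1⟩, h.2, rfl⟩⟩

open SimpleGraph in
/-- For any cycle `C_n` with `n ≥ 3`, the 2-limited packing number equals `⌊2n/3⌋`. -/
theorem stmt1 (n : ℕ) (hn : 3 ≤ n) :
    (SimpleGraph.cycleGraph n).limitedPackingNumber 2 = 2 * n / 3 := by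
  obtain ⟨m, rfl⟩ : ∃ m, n = m + 3 := ⟨n - 3, by omega⟩
  apply limitedPackingNumber_eq_of_isGreatest
  refine ⟨⟨_, cycleGraph_isLimitedPacking_two (m + 1), ?_⟩, ?_⟩
  · exact (Fin.ncard_setOf_val (· % 3 ≠ 0) _).trans (Nat.count_mod_three_ne_zero _)
  · rintro _ ⟨X, hX, rfl⟩
    have hbound := hX.ncard_mul_le (cycleGraph_isRegularOfDegree_two m)
    rw [Fintype.card_fin] at hbound
    omega
end

section
/- For n divisible by 6, the disjoint union of n/6 copies of H_6 (the 6-cycle with all three long chords) is a cubic graph G on n vertices with L_2(G) = n/3. -/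
/-- `H_6`: the 6-cycle `0-1-2-3-4-5-0` together with the three long chords
`{0,3}, {1,4}, {2,5}` (the circulant graph `C_6(1,3)`). -/
def H6 : SimpleGraph (Fin 6) :=
  SimpleGraph.fromRel (fun i j => (j : ℕ) = ((i : ℕ) + 1) % 6 ∨ (j : ℕ) = ((i : ℕ) + 3) % 6)

/-- The disjoint union of `m` copies of `H_6`. -/
def manyH6 (m : ℕ) : SimpleGraph (Fin m × Fin 6) where
  Adj x y := x.1 = y.1 ∧ H6.Adj x.2 y.2
  symm := by
    constructor
    rintro x y ⟨h1, h2⟩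
    exact ⟨h1.symm, h2.symm⟩
  loopless := by
    constructor
    rintro x ⟨-, h⟩
    exact H6.irrefl h

noncomputable instance (m : ℕ) : (manyH6 m).LocallyFinite :=
  fun _ => Fintype.ofFinite _

lemma Set.ncard_eq_sum_ncard_preimage_prodMk {ι W : Type*} [Fintype ι] [Finite W]
    (X : Set (ι × W)) : X.ncard = ∑ i, (Prod.mk i ⁻¹' X).ncard := by
  rw [← Nat.card_coe_set_eq,
    Nat.card_congr (Equiv.subtypeProdEquivSigmaSubtype fun i w => (i, w) ∈ X), Nat.card_sigma]
  rfl

namespace SimpleGraph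

lemma IsRegularOfDegree.boxProd {V W : Type*} {G : SimpleGraph V} {H : SimpleGraph W}
    [G.LocallyFinite] [H.LocallyFinite] [(G □ H).LocallyFinite] {d e : ℕ}
    (hG : G.IsRegularOfDegree d) (hH : H.IsRegularOfDegree e) :
    (G □ H).IsRegularOfDegree (d + e) := by
  intro x
  rw [degree_boxProd, hG, hH]

section LimitedPacking

variable {V : Type*} (G : SimpleGraph V) (k : ℕ)

lemma isLimitedPacking_of_ncard_le {X : Set V} (hX : X.Finite) (hk : X.ncard ≤ k) :
    G.IsLimitedPacking k X :=
  fun _ => (Set.ncard_le_ncard Set.inter_subset_left hX).trans hk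

lemma isLimitedPacking_coe_finset_iff [Fintype V] [DecidableEq V] [DecidableRel G.Adj]
    (s : Finset V) :
    G.IsLimitedPacking k s ↔ ∀ v, (s ∩ insert v (G.neighborFinset v)).card ≤ k := by
  have hN (v : V) : G.closedNbhd v = ↑(insert v (G.neighborFinset v)) := by
    simp [closedNbhd]
  simp only [IsLimitedPacking, hN, ← Finset.coe_inter, Set.ncard_coe_finset]

lemma limitedPackingNumber_eq_of_forall_ncard_le {X : Set V} {L : ℕ}
    (hX : G.IsLimitedPacking k X) (hXcard : X.ncard = L)
    (hle : ∀ Y, G.IsLimitedPacking k Y → Y.ncard ≤ L) : G.limitedPackingNumber k = L :=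
  IsGreatest.csSup_eq ⟨⟨X, hX, hXcard⟩, by rintro _ ⟨Y, hY, rfl⟩; exact hle Y hY⟩

variable [Finite V]

lemma bddAbove_ncard_isLimitedPacking :
    BddAbove {n | ∃ X : Set V, G.IsLimitedPacking k X ∧ X.ncard = n} :=
  ⟨Nat.card V, by rintro _ ⟨X, -, rfl⟩; exact Set.ncard_le_card X⟩

lemma IsLimitedPacking.ncard_le_limitedPackingNumber {G : SimpleGraph V} {k : ℕ} {X : Set V}
    (hX : G.IsLimitedPacking k X) : X.ncard ≤ G.limitedPackingNumber k :=
  le_csSup (G.bddAbove_ncard_isLimitedPacking k) ⟨X, hX, rfl⟩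

lemma exists_isLimitedPacking_ncard_eq :
    ∃ X : Set V, G.IsLimitedPacking k X ∧ X.ncard = G.limitedPackingNumber k := by
  have hne : {n | ∃ X : Set V, G.IsLimitedPacking k X ∧ X.ncard = n}.Nonempty :=
    ⟨0, ∅, G.isLimitedPacking_of_ncard_le k Set.finite_empty (by simp), by simp⟩
  exact Nat.sSup_mem hne (G.bddAbove_ncard_isLimitedPacking k)

end LimitedPacking

section BoxProd

variable {ι W : Type*} (H : SimpleGraph W) (k : ℕ)

lemma closedNbhd_bot_boxProd (i : ι) (w : W) :
    ((⊥ : SimpleGraph ι) □ H).closedNbhd (i, w) = Prod.mk i '' H.closedNbhd w := by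
  ext ⟨j, u⟩
  simp [closedNbhd, boxProd_adj, eq_comm]

lemma isLimitedPacking_bot_boxProd_iff (X : Set (ι × W)) :
    ((⊥ : SimpleGraph ι) □ H).IsLimitedPacking k X ↔
      ∀ i, H.IsLimitedPacking k (Prod.mk i ⁻¹' X) := by
  have hfiber (i : ι) (w : W) : (X ∩ ((⊥ : SimpleGraph ι) □ H).closedNbhd (i, w)).ncard =
      (Prod.mk i ⁻¹' X ∩ H.closedNbhd w).ncard := by
    rw [closedNbhd_bot_boxProd, ← Set.image_preimage_inter,
      Set.ncard_image_of_injective _ (Prod.mk_right_injective i)]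
  simp only [IsLimitedPacking, Prod.forall, hfiber]

lemma limitedPackingNumber_bot_boxProd [Fintype ι] [Finite W] :
    ((⊥ : SimpleGraph ι) □ H).limitedPackingNumber k =
      Fintype.card ι * H.limitedPackingNumber k := by
  obtain ⟨Y, hY, hYcard⟩ := H.exists_isLimitedPacking_ncard_eq k
  refine limitedPackingNumber_eq_of_forall_ncard_le _ k (X := Set.univ ×ˢ Y) ?_ ?_ ?_
  · rw [isLimitedPacking_bot_boxProd_iff]
    intro i
    rwa [Set.mk_preimage_prod_right (Set.mem_univ i)]
  · rw [Set.ncard_prod, Set.ncard_univ, Nat.card_eq_fintype_card, hYcard]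
  · intro X hX
    rw [Set.ncard_eq_sum_ncard_preimage_prodMk, ← smul_eq_mul, ← Finset.card_univ,
      ← Finset.sum_const]
    exact Finset.sum_le_sum fun i _ =>
      ((isLimitedPacking_bot_boxProd_iff H k X).1 hX i).ncard_le_limitedPackingNumber

end BoxProd

end SimpleGraph

open SimpleGraph

instance : DecidableRel H6.Adj := fun a b =>
  decidable_of_iff _ (fromRel_adj _ a b).symm

lemma H6_isRegularOfDegree : H6.IsRegularOfDegree 3 := by
  unfold IsRegularOfDegree
  decide

lemma H6_limitedPackingNumber_two : H6.limitedPackingNumber 2 = 2 := by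
  have hbound : ∀ s : Finset (Fin 6), H6.IsLimitedPacking 2 s → s.card ≤ 2 := by
    simp only [isLimitedPacking_coe_finset_iff]
    decide
  refine limitedPackingNumber_eq_of_forall_ncard_le _ 2 (X := {0, 1})
    (isLimitedPacking_of_ncard_le _ 2 (Set.toFinite _) (Set.ncard_pair (by decide)).le)
    (Set.ncard_pair (by decide)) fun Y hY => ?_
  obtain ⟨s, rfl⟩ := Y.toFinite.exists_finset_coe
  rw [Set.ncard_coe_finset]
  exact hbound s hY

lemma manyH6_eq_bot_boxProd (m : ℕ) : manyH6 m = (⊥ : SimpleGraph (Fin m)) □ H6 := by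
  ext x y
  simp [manyH6, boxProd_adj, and_comm]

/-- For `n` divisible by 6, the disjoint union of `n/6` copies of `H_6` is a cubic
graph on `n` vertices with `L_2 = n/3`. -/
theorem stmt19 (n m : ℕ) (hnm : n = 6 * m) :
    (manyH6 m).IsRegularOfDegree 3 ∧
      3 * (manyH6 m).limitedPackingNumber 2 = n := by
  refine ⟨?_, ?_⟩
  · -- `convert` reconciles the `LocallyFinite` instance of `manyH6 m` with that of `⊥ □ H6`.
    have h := (IsRegularOfDegree.bot (V := Fin m)).boxProd H6_isRegularOfDegree
    rw [zero_add] at h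
    convert h using 1
    exact manyH6_eq_bot_boxProd m
  · rw [manyH6_eq_bot_boxProd, limitedPackingNumber_bot_boxProd, Fintype.card_fin,
      H6_limitedPackingNumber_two]
    omega
end
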